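/- arXiv:2303.07307 — 4 statements merged into one kernel-verified Lean document; each statement's English description precedes it below -/
import Mathlib

section
/- Let I₀ = {(α_{j₁},j₁),…,(α_{j_s},j_s)} ⊆ {−1,1}×{1,…,m} be admissible and irreducible. Then every ξ ∈ ℝⁿ and nonnegative reals λ_{j₁},…,λ_{j_s} satisfying ξ_Ψ − ξ_Φ = c₁ for some c₁ > 0 and λ_{j₁}α_{j₁}e_{j₁}+⋯+λ_{j_s}α_{j_s}e_{j_s} = Dξ satisfy property (twostates): ξ_i ∈ {ξ_Φ, ξ_Ψ} for every node i ∈ {1,…,n}. -/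
open Matrix

noncomputable section

/-- The vector `λ_{j₁}α_{j₁}e_{j₁} + ⋯ + λ_{j_s}α_{j_s}e_{j_s}` associated to a set
`I₀ ⊆ {−1,1} × {1,…,m}` (encoded as a finite set of pairs `(α, j)`) and
coefficients `lam`. -/
def combo {m : ℕ} (I₀ : Finset (ℝ × Fin m)) (lam : Fin m → ℝ) : Fin m → ℝ :=
  ∑ p ∈ I₀, (lam p.2 * p.1) • (Pi.single p.2 (1 : ℝ) : Fin m → ℝ)

/-- `I₀` is admissible: there exist `c₁ > 0` and nonnegative reals `λ` such that
`Rᵀ(λ_{j₁}α_{j₁}e_{j₁}+⋯+λ_{j_s}α_{j_s}e_{j_s}) = c₁` and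
`(D⊥)ᵀ(λ_{j₁}α_{j₁}e_{j₁}+⋯+λ_{j_s}α_{j_s}e_{j_s}) = 0`. -/
def Admissible {m r : ℕ} (R : Fin m → ℝ) (Dperp : Matrix (Fin m) (Fin r) ℝ)
    (I₀ : Finset (ℝ × Fin m)) : Prop :=
  ∃ (lam : Fin m → ℝ) (c₁ : ℝ), 0 < c₁ ∧ (∀ j, 0 ≤ lam j) ∧
    R ⬝ᵥ combo I₀ lam = c₁ ∧ Dperpᵀ *ᵥ combo I₀ lam = 0

/-- Two nodes are adjacent if some spring has them as its two endpoints. -/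
def Adjacent {m n : ℕ} (src trg : Fin m → Fin n) (i j : Fin n) : Prop :=
  ∃ k, (src k = i ∧ trg k = j) ∨ (src k = j ∧ trg k = i)

lemma combo_apply {m : ℕ} (I₀ : Finset (ℝ × Fin m)) (lam : Fin m → ℝ) (k : Fin m) :
    combo I₀ lam k = ∑ p ∈ I₀, if k = p.2 then lam p.2 * p.1 else 0 := by
  simp [combo, Finset.sum_apply, Pi.single_apply, mul_ite]

lemma combo_apply_mem {m : ℕ} (I₀ : Finset (ℝ × Fin m)) (lam : Fin m → ℝ)
    (hdist : ∀ p ∈ I₀, ∀ q ∈ I₀, p.2 = q.2 → p = q)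
    (p : ℝ × Fin m) (hp : p ∈ I₀) : combo I₀ lam p.2 = lam p.2 * p.1 := by
  rw [combo_apply]
  rw [Finset.sum_eq_single_of_mem p hp]
  · simp
  · intro q hq hqp
    rw [if_neg]
    intro h
    exact hqp (hdist q hq p hp h.symm)

lemma combo_apply_notmem {m : ℕ} (I₀ : Finset (ℝ × Fin m)) (lam : Fin m → ℝ)
    (k : Fin m) (hk : ∀ p ∈ I₀, p.2 ≠ k) : combo I₀ lam k = 0 := by
  rw [combo_apply]
  apply Finset.sum_eq_zero
  intro p hp
  rw [if_neg fun h => hk p hp h.symm]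

lemma combo_erase {m : ℕ} (I₀ : Finset (ℝ × Fin m)) (lam : Fin m → ℝ)
    (p : ℝ × Fin m) (hlam : lam p.2 = 0) :
    combo (I₀.erase p) lam = combo I₀ lam := by
  unfold combo
  apply Finset.sum_erase
  simp [hlam]

lemma combo_sub {m : ℕ} (I₀ : Finset (ℝ × Fin m)) (lam μ : Fin m → ℝ) (ε : ℝ) :
    combo I₀ (fun k => lam k - ε * μ k) = combo I₀ lam - ε • combo I₀ μ := by
  unfold combo
  rw [Finset.smul_sum, ← Finset.sum_sub_distrib]
  apply Finset.sum_congr rfl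
  intro p _
  rw [smul_smul, ← sub_smul]
  congr 1
  ring

lemma mulVec_apply' {m n : ℕ} (src trg : Fin m → Fin n)
    (D : Matrix (Fin m) (Fin n) ℝ)
    (hD : ∀ k i, D k i = (if i = trg k then (1 : ℝ) else 0) - (if i = src k then 1 else 0))
    (ξ : Fin n → ℝ) (k : Fin m) : (D *ᵥ ξ) k = ξ (trg k) - ξ (src k) := by
  simp only [mulVec, dotProduct, hD, sub_mul, ite_mul, one_mul, zero_mul,
    Finset.sum_sub_distrib]
  rw [Finset.sum_ite_eq' Finset.univ (trg k) ξ, Finset.sum_ite_eq' Finset.univ (src k) ξ]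
  simp

/-- property (twostates): if `I₀` is admissible and irreducible, then
every `ξ` and nonnegative `λ` satisfying `ξ_Ψ − ξ_Φ = c₁ > 0` and
`λ_{j₁}α_{j₁}e_{j₁}+⋯+λ_{j_s}α_{j_s}e_{j_s} = Dξ` satisfy
`ξ_i ∈ {ξ_Φ, ξ_Ψ}` for every node `i`. -/
theorem statement4 (m n : ℕ) (hn : 2 ≤ n) (hmn : n ≤ m)
    (src trg : Fin m → Fin n) (hst : ∀ k, src k ≠ trg k)
    (D : Matrix (Fin m) (Fin n) ℝ)
    (hD : ∀ k i, D k i = (if i = trg k then (1 : ℝ) else 0) - (if i = src k then 1 else 0))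
    (hconn : ∀ i i' : Fin n, ∃ (q : ℕ) (w : ℕ → Fin n), w 0 = i ∧ w q = i' ∧
      ∀ t < q, Adjacent src trg (w t) (w (t + 1)))
    (Φ Ψ : Fin n) (hΦΨ : Φ ≠ Ψ)
    (R : Fin m → ℝ) (hR : ∀ ξ : Fin n → ℝ, R ⬝ᵥ (D *ᵥ ξ) = ξ Ψ - ξ Φ)
    (Dperp : Matrix (Fin m) (Fin (m - n + 1)) ℝ)
    (hperp : Dperpᵀ * D = 0) (hrank : Dperp.rank = m - n + 1)
    (hker : ∀ v : Fin m → ℝ, Dperpᵀ *ᵥ v = 0 ↔ ∃ ξ : Fin n → ℝ, v = D *ᵥ ξ)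
    (I₀ : Finset (ℝ × Fin m))
    (hsgn : ∀ p ∈ I₀, p.1 = 1 ∨ p.1 = -1)
    (hdist : ∀ p ∈ I₀, ∀ q ∈ I₀, p.2 = q.2 → p = q)
    (hadm : Admissible R Dperp I₀)
    (hirr : ∀ I ⊂ I₀, ¬ Admissible R Dperp I) :
    ∀ (ξ : Fin n → ℝ) (lam : Fin m → ℝ) (c₁ : ℝ),
      0 < c₁ → ξ Ψ - ξ Φ = c₁ → (∀ j, 0 ≤ lam j) → combo I₀ lam = D *ᵥ ξ →
      ∀ i : Fin n, ξ i = ξ Φ ∨ ξ i = ξ Ψ := by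
  intro ξ lam c₁ hc₁ hξ hlam hcombo i
  classical
  set a := ξ Φ with ha
  set b := ξ Ψ with hb
  have hab : a < b := by rw [ha, hb]; linarith
  -- Dperpᵀ kills the column space of D
  have hDperp0 : ∀ v : Fin n → ℝ, Dperpᵀ *ᵥ (D *ᵥ v) = 0 := by
    intro v
    rw [Matrix.mulVec_mulVec, hperp, Matrix.zero_mulVec]
  -- springs with differing endpoint values are indexed by I₀
  have hindexed : ∀ k : Fin m, ξ (src k) ≠ ξ (trg k) → ∃ p ∈ I₀, p.2 = k := by
    intro k hk
    by_contra hcon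
    push_neg at hcon
    have h0 : combo I₀ lam k = 0 := combo_apply_notmem I₀ lam k hcon
    rw [hcombo, mulVec_apply' src trg D hD] at h0
    exact hk (by linarith)
  -- all lam on I₀ are positive, else erasing gives an admissible proper subset
  have hpos : ∀ p ∈ I₀, 0 < lam p.2 := by
    intro p hp
    rcases lt_or_eq_of_le (hlam p.2) with h | h
    · exact h
    · exfalso
      apply hirr (I₀.erase p) (Finset.erase_ssubset hp)
      refine ⟨lam, c₁, hc₁, hlam, ?_, ?_⟩
      · rw [combo_erase I₀ lam p h.symm, hcombo, hR]
        exact hξ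
      · rw [combo_erase I₀ lam p h.symm, hcombo]
        exact hDperp0 ξ
  -- spring equation
  have hsign : ∀ p ∈ I₀, ξ (trg p.2) - ξ (src p.2) = lam p.2 * p.1 := by
    intro p hp
    have := congrFun hcombo p.2
    rw [combo_apply_mem I₀ lam hdist p hp, mulVec_apply' src trg D hD] at this
    linarith [this]
  -- cut vectors
  set ξt : ℝ → Fin n → ℝ := fun t x => if t < ξ x then 1 else 0 with hξt
  set μt : ℝ → Fin m → ℝ :=
    fun t k => if (t < ξ (src k)) ↔ (t < ξ (trg k)) then 0 else 1 with hμt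
  have hμnn : ∀ t k, 0 ≤ μt t k := by
    intro t k
    rw [hμt]
    dsimp only
    split_ifs <;> norm_num
  have hμ01 : ∀ t k, μt t k = 0 ∨ μt t k = 1 := by
    intro t k
    rw [hμt]
    dsimp only
    split_ifs <;> simp
  have hcut : ∀ t : ℝ, combo I₀ (μt t) = D *ᵥ (ξt t) := by
    intro t
    funext k
    rw [mulVec_apply' src trg D hD]
    by_cases hidx : ∃ p ∈ I₀, p.2 = k
    · obtain ⟨p, hp, hpk⟩ := hidx
      subst hpk
      rw [combo_apply_mem I₀ (μt t) hdist p hp]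
      have hs := hsign p hp
      have hl := hpos p hp
      simp only [hμt, hξt]
      by_cases h1 : t < ξ (src p.2) <;> by_cases h2 : t < ξ (trg p.2)
      · rw [if_pos (iff_of_true h1 h2), if_pos h2, if_pos h1]; ring
      · rw [if_neg (fun hh => h2 (hh.mp h1)), if_neg h2, if_pos h1]
        rcases hsgn p hp with hα | hα <;> rw [hα] at hs ⊢
        · exfalso; have := not_lt.mp h2; linarith
        · norm_num
      · rw [if_neg (fun hh => h1 (hh.mpr h2)), if_pos h2, if_neg h1]
        rcases hsgn p hp with hα | hα <;> rw [hα] at hs ⊢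
        · norm_num
        · exfalso; have := not_lt.mp h1; linarith
      · rw [if_pos (iff_of_false h1 h2), if_neg h2, if_neg h1]; ring
    · push_neg at hidx
      rw [combo_apply_notmem I₀ (μt t) k hidx]
      have : ξ (src k) = ξ (trg k) := by
        by_contra hne
        obtain ⟨p, hp, hpk⟩ := hindexed k hne
        exact (hidx p hp) hpk
      simp only [hξt]
      rw [this]
      ring
  -- inside levels: every indexed spring crosses
  have hin : ∀ t : ℝ, a ≤ t → t < b → ∀ k : Fin m, (∃ p ∈ I₀, p.2 = k) →
      ¬ ((t < ξ (src k)) ↔ (t < ξ (trg k))) := by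
    intro t ht1 ht2 k ⟨p, hp, hpk⟩ hiff
    have hμ0 : μt t p.2 = 0 := by
      rw [hμt]; dsimp only; rw [hpk, if_pos hiff]
    apply hirr (I₀.erase p) (Finset.erase_ssubset hp)
    refine ⟨μt t, 1, one_pos, hμnn t, ?_, ?_⟩
    · rw [combo_erase I₀ (μt t) p hμ0, hcut t, hR]
      rw [hξt]
      dsimp only
      rw [if_pos ht2, if_neg (not_lt.mpr ht1)]
      norm_num
    · rw [combo_erase I₀ (μt t) p hμ0, hcut t]
      exact hDperp0 (ξt t)
  -- outside levels: no spring crosses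
  have hout : ∀ t : ℝ, (t < a ∨ b ≤ t) → ∀ k : Fin m,
      ((t < ξ (src k)) ↔ (t < ξ (trg k))) := by
    intro t ht k
    by_contra hcross
    set S : Finset (Fin m) := Finset.univ.filter (fun k => μt t k ≠ 0) with hS
    have hkS : k ∈ S := by
      rw [hS, Finset.mem_filter]
      refine ⟨Finset.mem_univ k, ?_⟩
      rw [hμt]; dsimp only; rw [if_neg hcross]; norm_num
    have hSn : S.Nonempty := ⟨k, hkS⟩
    have hSidx : ∀ j ∈ S, ∃ p ∈ I₀, p.2 = j := by
      intro j hj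
      rw [hS, Finset.mem_filter] at hj
      apply hindexed
      intro heq
      apply hj.2
      rw [hμt]; dsimp only; rw [heq, if_pos Iff.rfl]
    have hSpos : ∀ j ∈ S, 0 < lam j := by
      intro j hj
      obtain ⟨p, hp, hpj⟩ := hSidx j hj
      rw [← hpj]
      exact hpos p hp
    set ε : ℝ := S.inf' hSn lam with hε
    have hεpos : 0 < ε := by
      rw [hε, Finset.lt_inf'_iff]
      exact hSpos
    obtain ⟨k', hk'S, hk'⟩ := Finset.exists_mem_eq_inf' hSn lam
    obtain ⟨p', hp', hp'k⟩ := hSidx k' hk'S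
    set ν : Fin m → ℝ := fun j => lam j - ε * μt t j with hν
    have hνnn : ∀ j, 0 ≤ ν j := by
      intro j
      rw [hν]
      dsimp only
      rcases hμ01 t j with h | h
      · rw [h]; simpa using hlam j
      · rw [h, mul_one, sub_nonneg, hε]
        apply Finset.inf'_le
        rw [hS, Finset.mem_filter]
        exact ⟨Finset.mem_univ j, by rw [h]; norm_num⟩
    have hμk' : μt t k' = 1 := by
      rcases hμ01 t k' with h | h
      · exfalso
        rw [hS, Finset.mem_filter] at hk'S
        exact hk'S.2 h
      · exact h
    have hνk' : ν p'.2 = 0 := by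
      rw [hν]; dsimp only; rw [hp'k, hμk', hε, hk']; ring
    have hcomboν : combo (I₀.erase p') ν = D *ᵥ ξ - ε • (D *ᵥ ξt t) := by
      rw [combo_erase I₀ ν p' hνk', hν, combo_sub, hcombo, hcut t]
    have hξt0 : ξt t Ψ - ξt t Φ = 0 := by
      rw [hξt]
      dsimp only
      rcases ht with h | h
      · rw [if_pos (by rw [← hb]; linarith), if_pos (by rw [← ha]; linarith)]; ring
      · rw [if_neg (by rw [← hb]; linarith), if_neg (by rw [← ha]; linarith)]; ring
    apply hirr (I₀.erase p') (Finset.erase_ssubset hp')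
    refine ⟨ν, c₁, hc₁, hνnn, ?_, ?_⟩
    · rw [hcomboν, dotProduct_sub, dotProduct_smul, hR, hR, hξt0, hξ]
      simp
    · rw [hcomboν, mulVec_sub, mulVec_smul, hDperp0, hDperp0]
      simp
  -- main symmetric contradiction lemma
  by_contra hcon
  push_neg at hcon
  obtain ⟨hca, hcb⟩ := hcon
  set c := ξ i with hc
  have main : ∀ u : ℝ, u ≠ c →
      (∀ t : ℝ, a ≤ t → t < b → ¬ ((t < c) ↔ (t < u))) →
      (∀ t : ℝ, (t < a ∨ b ≤ t) → ((t < c) ↔ (t < u))) → False := by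
    intro u hu hin' hout'
    rcases lt_trichotomy c a with hlt | heq | hgt
    · rcases lt_or_gt_of_ne hu with h | h
      · exact absurd ((hout' u (Or.inl (by linarith))).mp (by linarith)) (lt_irrefl u)
      · exact absurd ((hout' c (Or.inl hlt)).mpr (by linarith)) (lt_irrefl c)
    · exact hca (hc ▸ heq)
    · rcases lt_trichotomy c b with hlt2 | heq2 | hgt2
      · rcases lt_or_gt_of_ne hu with h | h
        · exact hin' c (le_of_lt hgt) hlt2
            (iff_of_false (lt_irrefl c) (not_lt.mpr (le_of_lt h)))
        · exact hin' a le_rfl hab (iff_of_true hgt (by linarith))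
      · exact hcb (hc ▸ heq2)
      · rcases le_or_gt u b with h | h
        · exact absurd ((hout' b (Or.inr le_rfl)).mp hgt2) (not_lt.mpr h)
        · exact hin' a le_rfl hab (iff_of_true hgt (by linarith))
  -- find an adjacent spring with one endpoint of value c
  obtain ⟨q, w, hw0, hwq, hadj⟩ := hconn i Φ
  have hex : ∃ r, ξ (w r) ≠ c := ⟨q, by rw [hwq, ← ha, hc]; exact fun hh => hca hh.symm⟩
  set r := Nat.find hex with hr
  have hrspec : ξ (w r) ≠ c := Nat.find_spec hex
  have hrpos : r ≠ 0 := by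
    intro h0
    apply hrspec
    rw [h0, hw0, hc]
  have hrq : r ≤ q := Nat.find_le (by rw [hwq, ← ha, hc]; exact fun hh => hca hh.symm)
  have hprev : ξ (w (r - 1)) = c := by
    by_contra hne
    have h1 : Nat.find hex ≤ r - 1 := Nat.find_le hne
    rw [← hr] at h1
    omega
  have hadj' : Adjacent src trg (w (r - 1)) (w r) := by
    have := hadj (r - 1) (by omega)
    rwa [show r - 1 + 1 = r by omega] at this
  obtain ⟨k, hk⟩ := hadj'
  have hk' : (ξ (src k) = c ∧ ξ (trg k) ≠ c) ∨ (ξ (trg k) = c ∧ ξ (src k) ≠ c) := by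
    rcases hk with ⟨h1, h2⟩ | ⟨h1, h2⟩
    · left; rw [h1, h2]; exact ⟨hprev, hrspec⟩
    · right; rw [h1, h2]; exact ⟨hprev, hrspec⟩
  have hne : ξ (src k) ≠ ξ (trg k) := by
    rcases hk' with ⟨h1, h2⟩ | ⟨h1, h2⟩
    · rw [h1]; exact fun hh => h2 hh.symm
    · rw [h1]; exact h2
  have hidx := hindexed k hne
  rcases hk' with ⟨h1, h2⟩ | ⟨h1, h2⟩
  · apply main (ξ (trg k)) h2
    · intro t ht1 ht2
      rw [← h1]
      exact hin t ht1 ht2 k hidx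
    · intro t ht
      rw [← h1]
      exact hout t ht k
  · apply main (ξ (src k)) h2
    · intro t ht1 ht2 hiff
      rw [← h1] at hiff
      exact hin t ht1 ht2 k hidx hiff.symm
    · intro t ht
      rw [← h1]
      exact (hout t ht k).symm
end
end

section
/- Let ξ ∈ ℝⁿ satisfy ξ_Φ ≤ ξ_i for all i ∈ {1,…,n}, suppose the set {i : ξ_i > ξ_Φ} is nonempty, and let μ = min{ξ_i : ξ_i > ξ_Φ}. Define ξ̃ ∈ ℝⁿ by ξ̃_i = ξ_Φ if ξ_i = μ and ξ̃_i = ξ_i otherwise. Then for every spring k ∈ {1,…,m}: (i) if (Dξ)_k = 0 then (Dξ̃)_k = 0; and (ii) if (Dξ)_k ≠ 0 then either (Dξ̃)_k = 0, or (Dξ̃)_k has the same sign as (Dξ)_k and |(Dξ̃)_k| ≥ |(Dξ)_k|. -/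
open Matrix

noncomputable section

/-- collapsing all nodes at the lowest coordinate `μ` above `ξ_Φ` down to
`ξ_Φ` either nullifies a spring or preserves the sign of its length while not
decreasing its absolute value; springs of zero length stay of zero length. -/
theorem statement6 (m n : ℕ) (hn : 2 ≤ n) (hmn : n ≤ m)
    -- the lattice spring model: springs `k` go from node `src k` to node `trg k`
    (src trg : Fin m → Fin n) (hst : ∀ k, src k ≠ trg k)
    -- the matrix `D` (so `−Dᵀ` is the incidence matrix)
    (D : Matrix (Fin m) (Fin n) ℝ)
    (hD : ∀ k i, D k i = (if i = trg k then (1 : ℝ) else 0) - (if i = src k then 1 else 0))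
    -- the distinguished node
    (Φ : Fin n)
    -- `ξ_Φ ≤ ξ_i` for all nodes `i`
    (ξ : Fin n → ℝ) (hmin : ∀ i, ξ Φ ≤ ξ i)
    -- `μ` is the minimum of the nonempty set `{ξ_i : ξ_i > ξ_Φ}`
    (μ : ℝ) (hμmem : ∃ i, ξ i = μ ∧ ξ Φ < μ)
    (hμmin : ∀ i, ξ Φ < ξ i → μ ≤ ξ i)
    -- `ξ̃` collapses to `ξ_Φ` all nodes at coordinate `μ`
    (ξt : Fin n → ℝ) (hξt : ∀ i, ξt i = if ξ i = μ then ξ Φ else ξ i) :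
    ∀ k : Fin m,
      ((D *ᵥ ξ) k = 0 → (D *ᵥ ξt) k = 0) ∧
      ((D *ᵥ ξ) k ≠ 0 →
        (D *ᵥ ξt) k = 0 ∨
          (Real.sign ((D *ᵥ ξt) k) = Real.sign ((D *ᵥ ξ) k) ∧
            |(D *ᵥ ξ) k| ≤ |(D *ᵥ ξt) k|)) := by
  obtain ⟨i₀, hi₀, hΦμ⟩ := hμmem
  have key : ∀ (v : Fin n → ℝ) (k : Fin m), (D *ᵥ v) k = v (trg k) - v (src k) := by
    intro v k
    simp only [mulVec, dotProduct, hD, sub_mul, one_mul, zero_mul, ite_mul,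
      Finset.sum_sub_distrib, Finset.sum_ite_eq', Finset.mem_univ, if_true]
  intro k
  rw [key, key]
  set a := ξ (src k) with ha
  set b := ξ (trg k) with hb
  have hat : ξt (src k) = if a = μ then ξ Φ else a := hξt _
  have hbt : ξt (trg k) = if b = μ then ξ Φ else b := hξt _
  have hΦa : ξ Φ ≤ a := hmin _
  have hΦb : ξ Φ ≤ b := hmin _
  rw [hat, hbt]
  by_cases haμ : a = μ <;> by_cases hbμ : b = μ
  · rw [if_pos haμ, if_pos hbμ, haμ, hbμ]
    exact ⟨fun _ => sub_self _, fun h => absurd (sub_self μ) h⟩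
  · -- a = μ, b ≠ μ : new length b - ξΦ, old b - μ
    rw [if_pos haμ, if_neg hbμ, haμ]
    rcases lt_trichotomy b μ with hlt | heq | hgt
    · have hbΦ : b = ξ Φ := by
        by_contra h
        exact absurd (hμmin _ (lt_of_le_of_ne hΦb (Ne.symm h))) (not_le.mpr hlt)
      exact ⟨fun h => by exfalso; linarith [sub_eq_zero.mp h],
        fun _ => Or.inl (by rw [hbΦ]; ring)⟩
    · exact absurd heq hbμ
    · refine ⟨fun h => by exfalso; linarith [sub_eq_zero.mp h], fun _ => Or.inr ⟨?_, ?_⟩⟩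
      · rw [Real.sign_of_pos (by linarith : (0:ℝ) < b - ξ Φ),
          Real.sign_of_pos (by linarith : (0:ℝ) < b - μ)]
      · rw [abs_of_pos (by linarith : (0:ℝ) < b - μ),
          abs_of_pos (by linarith : (0:ℝ) < b - ξ Φ)]
        linarith
  · -- b = μ, a ≠ μ
    rw [if_neg haμ, if_pos hbμ, hbμ]
    rcases lt_trichotomy a μ with hlt | heq | hgt
    · have haΦ : a = ξ Φ := by
        by_contra h
        exact absurd (hμmin _ (lt_of_le_of_ne hΦa (Ne.symm h))) (not_le.mpr hlt)
      exact ⟨fun h => by exfalso; linarith [sub_eq_zero.mp h],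
        fun _ => Or.inl (by rw [haΦ]; ring)⟩
    · exact absurd heq haμ
    · refine ⟨fun h => by exfalso; linarith [sub_eq_zero.mp h], fun _ => Or.inr ⟨?_, ?_⟩⟩
      · rw [Real.sign_of_neg (by linarith : ξ Φ - a < 0),
          Real.sign_of_neg (by linarith : μ - a < 0)]
      · rw [abs_of_neg (by linarith : μ - a < 0),
          abs_of_neg (by linarith : ξ Φ - a < 0)]
        linarith
  · rw [if_neg haμ, if_neg hbμ]
    exact ⟨fun h => h, fun _ => Or.inr ⟨rfl, le_refl _⟩⟩
end
end

section
/- Let ξ ∈ ℝⁿ satisfy ξ_Ψ − ξ_Φ = c₁ for some c₁ > 0 and property (twostates): ξ_i ∈ {ξ_Φ, ξ_Ψ} for every node i. Let {j₁,…,j_s} = {j ∈ {1,…,m} : (Dξ)_j ≠ 0}, and put λ_{j_k} = |(Dξ)_{j_k}| and α_{j_k} = sign((Dξ)_{j_k}) for k ∈ {1,…,s}. Then λ_{j₁}α_{j₁}e_{j₁}+⋯+λ_{j_s}α_{j_s}e_{j_s} = Dξ and I₀ = {(α_{j₁},j₁),…,(α_{j_s},j_s)} is admissible; if moreover ξ satisfies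 property (twostates2) — for every node i ≠ Φ with ξ_i = ξ_Φ there is a walk from i to Φ all of whose nodes j satisfy ξ_j = ξ_Φ, and for every node i ≠ Ψ with ξ_i = ξ_Ψ there is a walk from i to Ψ all of whose nodes j satisfy ξ_j = ξ_Ψ — then I₀ is irreducible. -/
open Matrix

noncomputable section

/-- Property (twostates2): every node sharing coordinate `ξ_Φ` (resp. `ξ_Ψ`) is joined
to `Φ` (resp. `Ψ`) by a walk all of whose nodes have coordinate `ξ_Φ` (resp. `ξ_Ψ`). -/
def TwoStates2 {m n : ℕ} (src trg : Fin m → Fin n) (Φ Ψ : Fin n) (ξ : Fin n → ℝ) : Prop :=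
  (∀ i : Fin n, i ≠ Φ → ξ i = ξ Φ →
    ∃ (q : ℕ) (w : ℕ → Fin n), w 0 = i ∧ w q = Φ ∧
      (∀ t < q, Adjacent src trg (w t) (w (t + 1))) ∧ (∀ t ≤ q, ξ (w t) = ξ Φ)) ∧
  (∀ i : Fin n, i ≠ Ψ → ξ i = ξ Ψ →
    ∃ (q : ℕ) (w : ℕ → Fin n), w 0 = i ∧ w q = Ψ ∧
      (∀ t < q, Adjacent src trg (w t) (w (t + 1))) ∧ (∀ t ≤ q, ξ (w t) = ξ Ψ))

/-- Lemma `second`: for `ξ` with `ξ_Ψ − ξ_Φ = c₁ > 0` satisfying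
(twostates), setting `λ_j = |(Dξ)_j|`, `α_j = sign((Dξ)_j)` on the set `I₀` of springs
of nonzero length, one has `λ_{j₁}α_{j₁}e_{j₁}+⋯+λ_{j_s}α_{j_s}e_{j_s} = Dξ` and `I₀`
is admissible; if moreover `ξ` satisfies (twostates2), then `I₀` is irreducible. -/
theorem statement8 (m n : ℕ) (hn : 2 ≤ n) (hmn : n ≤ m)
    (src trg : Fin m → Fin n) (hst : ∀ k, src k ≠ trg k)
    (D : Matrix (Fin m) (Fin n) ℝ)
    (hD : ∀ k i, D k i = (if i = trg k then (1 : ℝ) else 0) - (if i = src k then 1 else 0))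
    (hconn : ∀ i i' : Fin n, ∃ (q : ℕ) (w : ℕ → Fin n), w 0 = i ∧ w q = i' ∧
      ∀ t < q, Adjacent src trg (w t) (w (t + 1)))
    (Φ Ψ : Fin n) (hΦΨ : Φ ≠ Ψ)
    (R : Fin m → ℝ) (hR : ∀ ξ : Fin n → ℝ, R ⬝ᵥ (D *ᵥ ξ) = ξ Ψ - ξ Φ)
    (Dperp : Matrix (Fin m) (Fin (m - n + 1)) ℝ)
    (hperp : Dperpᵀ * D = 0) (hrank : Dperp.rank = m - n + 1)
    (hker : ∀ v : Fin m → ℝ, Dperpᵀ *ᵥ v = 0 ↔ ∃ ξ : Fin n → ℝ, v = D *ᵥ ξ)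
    -- `ξ` with `ξ_Ψ − ξ_Φ = c₁ > 0` satisfying property (twostates)
    (ξ : Fin n → ℝ) (c₁ : ℝ) (hc₁ : 0 < c₁) (hgap : ξ Ψ - ξ Φ = c₁)
    (htwo : ∀ i : Fin n, ξ i = ξ Φ ∨ ξ i = ξ Ψ)
    -- `λ_j = |(Dξ)_j|`
    (lam : Fin m → ℝ) (hlam : ∀ j, lam j = |(D *ᵥ ξ) j|)
    -- `I₀ = {(sign((Dξ)_j), j) : (Dξ)_j ≠ 0}`
    (I₀ : Finset (ℝ × Fin m))
    (hI₀ : ∀ p : ℝ × Fin m,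
      p ∈ I₀ ↔ ((D *ᵥ ξ) p.2 ≠ 0 ∧ p.1 = Real.sign ((D *ᵥ ξ) p.2))) :
    combo I₀ lam = D *ᵥ ξ ∧ Admissible R Dperp I₀ ∧
      (TwoStates2 src trg Φ Ψ ξ → ∀ I ⊂ I₀, ¬ Admissible R Dperp I) := by
  classical
  have hmv : ∀ (v : Fin n → ℝ) (k : Fin m), (D *ᵥ v) k = v (trg k) - v (src k) := by
    intro v k
    simp only [Matrix.mulVec, dotProduct, hD, sub_mul, ite_mul, one_mul, zero_mul]
    rw [Finset.sum_sub_distrib]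
    simp
  have hcombo_apply : ∀ (I : Finset (ℝ × Fin m)) (l : Fin m → ℝ) (k : Fin m),
      combo I l k = ∑ p ∈ I, (l p.2 * p.1) * ((Pi.single p.2 (1:ℝ) : Fin m → ℝ) k) := by
    intro I l k
    simp [combo, Finset.sum_apply]
  have hzero : ∀ (I : Finset (ℝ × Fin m)) (l : Fin m → ℝ) (k : Fin m),
      (∀ p ∈ I, p.2 ≠ k) → combo I l k = 0 := by
    intro I l k h
    rw [hcombo_apply]
    refine Finset.sum_eq_zero fun p hp => ?_
    rw [Pi.single_eq_of_ne (Ne.symm (h p hp)), mul_zero]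
  have h1 : combo I₀ lam = D *ᵥ ξ := by
    funext k
    rw [hcombo_apply]
    by_cases hk : (D *ᵥ ξ) k = 0
    · rw [hk]
      refine Finset.sum_eq_zero fun p hp => ?_
      have hp' := (hI₀ p).1 hp
      have : k ≠ p.2 := by
        intro h; exact hp'.1 (by rw [← h]; exact hk)
      rw [Pi.single_eq_of_ne this, mul_zero]
    · have hmem : ((Real.sign ((D *ᵥ ξ) k)), k) ∈ I₀ := (hI₀ _).2 ⟨hk, rfl⟩
      rw [Finset.sum_eq_single_of_mem _ hmem]
      · simp only [Pi.single_eq_same, mul_one, hlam]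
        rw [mul_comm]
        rcases lt_trichotomy ((D *ᵥ ξ) k) 0 with h | h | h
        · rw [Real.sign_of_neg h, abs_of_neg h]; ring
        · exact absurd h hk
        · rw [Real.sign_of_pos h, abs_of_pos h, one_mul]
      · intro p hp hne
        have hp' := (hI₀ p).1 hp
        have : k ≠ p.2 := by
          intro h
          apply hne
          exact Prod.ext (by rw [hp'.2, ← h]) h.symm
        rw [Pi.single_eq_of_ne this, mul_zero]
  refine ⟨h1, ?_, ?_⟩
  · refine ⟨lam, c₁, hc₁, fun j => by rw [hlam]; exact abs_nonneg _, ?_, ?_⟩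
    · rw [h1, hR, hgap]
    · rw [h1, Matrix.mulVec_mulVec, hperp, Matrix.zero_mulVec]
  · rintro hts2 I hI ⟨l, c, hc, hl, hRc, hperp0⟩
    obtain ⟨ξ', hξ'⟩ := (hker _).1 hperp0
    have hsub : ∀ p ∈ I, p ∈ I₀ := fun p hp => hI.1 hp
    have hflat : ∀ k : Fin m, (D *ᵥ ξ) k = 0 → ξ' (trg k) = ξ' (src k) := by
      intro k hk
      have h0 : combo I l k = 0 := by
        refine hzero I l k fun p hp h => ?_
        exact ((hI₀ p).1 (hsub p hp)).1 (by rw [h]; exact hk)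
      have := hmv ξ' k
      rw [← hξ', h0] at this
      linarith
    have hwalk : ∀ (q : ℕ) (w : ℕ → Fin n),
        (∀ t < q, Adjacent src trg (w t) (w (t + 1))) →
        (∀ t ≤ q, ξ (w t) = ξ (w q)) → ξ' (w 0) = ξ' (w q) := by
      intro q
      induction q with
      | zero => intro w _ _; rfl
      | succ q ih =>
        intro w hadj heq
        have hstep : ξ' (w q) = ξ' (w (q + 1)) := by
          obtain ⟨k, hk⟩ := hadj q (Nat.lt_succ_self q)
          have hx : (D *ᵥ ξ) k = 0 := by
            rw [hmv]
            rcases hk with ⟨h1, h2⟩ | ⟨h1, h2⟩ <;>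
              rw [h1, h2] <;>
              rw [heq q (Nat.le_succ q), heq (q+1) le_rfl] <;> ring
          have := hflat k hx
          rcases hk with ⟨h1, h2⟩ | ⟨h1, h2⟩
          · rw [← h1, ← h2]; exact this.symm
          · rw [← h1, ← h2]; exact this
        rw [← hstep]
        exact ih w (fun t ht => hadj t (ht.trans (Nat.lt_succ_self q)))
          (fun t ht => by
            rw [heq t (ht.trans (Nat.le_succ q)), heq q (Nat.le_succ q)])
    have hvalne : ξ Φ ≠ ξ Ψ := by intro h; rw [h] at hgap; simp at hgap; linarith
    have hfixΦ : ∀ i : Fin n, ξ i = ξ Φ → ξ' i = ξ' Φ := by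
      intro i hi
      by_cases h : i = Φ
      · rw [h]
      · obtain ⟨q, w, hw0, hwq, hadj, heq⟩ := hts2.1 i h hi
        have := hwalk q w hadj (fun t ht => by rw [heq t ht, hwq])
        rwa [hw0, hwq] at this
    have hfixΨ : ∀ i : Fin n, ξ i = ξ Ψ → ξ' i = ξ' Ψ := by
      intro i hi
      by_cases h : i = Ψ
      · rw [h]
      · obtain ⟨q, w, hw0, hwq, hadj, heq⟩ := hts2.2 i h hi
        have := hwalk q w hadj (fun t ht => by rw [heq t ht, hwq])
        rwa [hw0, hwq] at this
    obtain ⟨p₀, hp₀I₀, hp₀I⟩ := Finset.exists_of_ssubset hI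
    have hp₀ := (hI₀ p₀).1 hp₀I₀
    set j₀ := p₀.2 with hj₀
    have hv0 : combo I l j₀ = 0 := by
      refine hzero I l j₀ fun p hp h => ?_
      apply hp₀I
      have hpI₀ := hsub p hp
      have hp' := (hI₀ p).1 hpI₀
      have : p = p₀ := Prod.ext (by rw [hp'.2, hp₀.2, h]) h
      rwa [← this]
    have hξ'eq : ξ' (trg j₀) = ξ' (src j₀) := by
      have := hmv ξ' j₀
      rw [← hξ', hv0] at this
      linarith
    have hxne : ξ (trg j₀) ≠ ξ (src j₀) := by
      intro h
      apply hp₀.1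
      rw [hmv, h, sub_self]
    have hΦΨ' : ξ' Φ = ξ' Ψ := by
      rcases htwo (src j₀) with hs | hs <;> rcases htwo (trg j₀) with ht | ht
      · exact absurd (ht.trans hs.symm) hxne
      · rw [← hfixΦ _ hs, ← hfixΨ _ ht, hξ'eq]
      · rw [← hfixΨ _ hs, ← hfixΦ _ ht, ← hξ'eq]
      · exact absurd (ht.trans hs.symm) hxne
    have : c = 0 := by
      rw [← hRc, hξ', hR, ← hΦΨ', sub_self]
    linarith
end
end

section
/- Suppose ξ ∈ ℝⁿ satisfies property (twostates2): for every node i ≠ Φ with ξ_i = ξ_Φ there is a walk from i to Φ all of whose nodes j satisfy ξ_j = ξ_Φ, and for every node i ≠ Ψ with ξ_i = ξ_Ψ there is a walk from i to Ψ all of whose nodes j satisfy ξ_j = ξ_Ψ. Let ξ̃ be obtained from ξ by one transformation step: for some adjacent nodes i*, j* with ξ_{i*} ∉ {ξ_Φ, ξ_Ψ} and ξ_{j*} ∈ {ξ_Φ, ξ_Ψ}, set ξ̃_{i*} = ξ_{j*} and ξ̃_t = ξ_t for all t ≠ i*. Then ξ̃ also satisfies property (twostates2). -/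
open Matrix

noncomputable section

lemma aux9 {m n : ℕ} (src trg : Fin m → Fin n) (Φ : Fin n) (ξ : Fin n → ℝ)
    (h : ∀ i : Fin n, i ≠ Φ → ξ i = ξ Φ →
      ∃ (q : ℕ) (w : ℕ → Fin n), w 0 = i ∧ w q = Φ ∧
        (∀ t < q, Adjacent src trg (w t) (w (t + 1))) ∧ (∀ t ≤ q, ξ (w t) = ξ Φ))
    (istar jstar : Fin n) (hadj : Adjacent src trg istar jstar)
    (hiΦ : ξ istar ≠ ξ Φ)
    (ξt : Fin n → ℝ) (hξt : ξt = Function.update ξ istar (ξ jstar)) :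
    ∀ i : Fin n, i ≠ Φ → ξt i = ξt Φ →
      ∃ (q : ℕ) (w : ℕ → Fin n), w 0 = i ∧ w q = Φ ∧
        (∀ t < q, Adjacent src trg (w t) (w (t + 1))) ∧ (∀ t ≤ q, ξt (w t) = ξt Φ) := by
  have hisΦ : istar ≠ Φ := fun e => hiΦ (by rw [e])
  have hξtΦ : ξt Φ = ξ Φ := by
    rw [hξt]; exact Function.update_of_ne (Ne.symm hisΦ) _ _
  have hξtne : ∀ j : Fin n, j ≠ istar → ξt j = ξ j := by
    intro j hj; rw [hξt]; exact Function.update_of_ne hj _ _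
  intro i hineΦ hi
  by_cases hii : i = istar
  · have hjΦ : ξ jstar = ξ Φ := by
      rw [hii, hξtΦ, hξt, Function.update_self] at hi
      exact hi
    have hival : ξt i = ξ Φ := by rw [hii, hξt, Function.update_self]; exact hjΦ
    by_cases hjs : jstar = Φ
    · refine ⟨1, fun t => if t = 0 then i else Φ, by simp, by simp, ?_, ?_⟩
      · intro t ht
        interval_cases t
        simp only [if_pos rfl]
        simpa [hjs, hii] using hadj
      · intro t ht
        interval_cases t
        · simpa [hξtΦ] using hival
        · simp [hξtΦ]
    · obtain ⟨q, w, hw0, hwq, hwadj, hwval⟩ := h jstar hjs hjΦ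
      refine ⟨q + 1, fun t => if t = 0 then i else w (t - 1), by simp, ?_, ?_, ?_⟩
      · simpa using hwq
      · intro t ht
        rcases Nat.eq_zero_or_pos t with rfl | htp
        · simpa [hw0, hii] using hadj
        · have h1 : t ≠ 0 := htp.ne'
          have h2 : t + 1 ≠ 0 := by omega
          simp only [h1, h2, if_neg, if_false]
          have h3 : t + 1 - 1 = t - 1 + 1 := by omega
          rw [h3]
          exact hwadj (t - 1) (by omega)
      · intro t ht
        rcases Nat.eq_zero_or_pos t with rfl | htp
        · simpa [hξtΦ] using hival
        · have h1 : t ≠ 0 := htp.ne'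
          simp only [h1, if_neg, if_false]
          have hv : ξ (w (t - 1)) = ξ Φ := hwval (t - 1) (by omega)
          have hne : w (t - 1) ≠ istar := fun e => hiΦ (by rw [← e, hv])
          rw [hξtne _ hne, hξtΦ]
          exact hv
  · have hi' : ξ i = ξ Φ := by rwa [hξtne i hii, hξtΦ] at hi
    obtain ⟨q, w, hw0, hwq, hwadj, hwval⟩ := h i hineΦ hi'
    refine ⟨q, w, hw0, hwq, hwadj, ?_⟩
    intro t ht
    have hv := hwval t ht
    have hne : w t ≠ istar := fun e => hiΦ (by rw [← e, hv])
    rw [hξtne _ hne, hξtΦ]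
    exact hv

/-- one transformation step (moving a node `i*` with
`ξ_{i*} ∉ {ξ_Φ, ξ_Ψ}`, adjacent to a node `j*` with `ξ_{j*} ∈ {ξ_Φ, ξ_Ψ}`, to the
coordinate `ξ_{j*}`) preserves property (twostates2). -/
theorem statement9 (m n : ℕ) (hn : 2 ≤ n) (hmn : n ≤ m)
    (src trg : Fin m → Fin n) (hst : ∀ k, src k ≠ trg k)
    (D : Matrix (Fin m) (Fin n) ℝ)
    (hD : ∀ k i, D k i = (if i = trg k then (1 : ℝ) else 0) - (if i = src k then 1 else 0))
    (Φ Ψ : Fin n) (hΦΨ : Φ ≠ Ψ)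
    (ξ : Fin n → ℝ)
    (h2s2 : TwoStates2 src trg Φ Ψ ξ)
    -- the transformation step
    (istar jstar : Fin n) (hadj : Adjacent src trg istar jstar)
    (hiΦ : ξ istar ≠ ξ Φ) (hiΨ : ξ istar ≠ ξ Ψ)
    (hj : ξ jstar = ξ Φ ∨ ξ jstar = ξ Ψ)
    (ξt : Fin n → ℝ) (hξt : ξt = Function.update ξ istar (ξ jstar)) :
    TwoStates2 src trg Φ Ψ ξt :=
  ⟨aux9 src trg Φ ξ h2s2.1 istar jstar hadj hiΦ ξt hξt,
   aux9 src trg Ψ ξ h2s2.2 istar jstar hadj hiΨ ξt hξt⟩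
end
end
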